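/- Let ℒ be the generator of an irreducible continuous-time Markov chain on a finite set V with stationary measure π, and let μ ∈ 𝒫(V). If H : V → ℝ is such that μ is stationary for the tilted chain with rates R_H(x,y) = R(x,y)e^{H(y)−H(x)}, then the Donsker–Varadhan functional satisfies ℐ(μ) ≥ 𝒥_H(μ) with equality, where 𝒥_H(μ) = Σ_{x,y} μ(x)R(x,y)(1 − e^{H(y)−H(x)}). (Statement: stationarity of μ for ℒ_H implies ℐ(μ) = 𝒥_H(μ).) -/

import Mathlib

/-- `𝒥_H(μ) = ∑_{x,y} μ(x) R(x,y) (1 − e^{H(y)−H(x)})`. -/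
noncomputable def DVJ {V : Type*} [Fintype V]
    (R : V → V → ℝ) (H : V → ℝ) (μ : V → ℝ) : ℝ :=
  ∑ x, ∑ y, μ x * R x y * (1 - Real.exp (H y - H x))

/-- Donsker–Varadhan rate functional `ℐ(μ) = sup_H 𝒥_H(μ)`. -/
noncomputable def DV {V : Type*} [Fintype V] (R : V → V → ℝ) (μ : V → ℝ) : ℝ :=
  ⨆ H : V → ℝ, DVJ R H μ

/-!
Writing `G = H + g`, convexity of `exp` gives, edge by edge,
`e^{H y - H x} (g y - g x) ≤ e^{G y - G x} - e^{H y - H x}`.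
Weighted by `μ x R x y ≥ 0` and summed, the left side vanishes by stationarity of `μ` for the
chain tilted by `H`, so `𝒥_G(μ) ≤ 𝒥_H(μ)` for every `G`: the supremum is attained at `H`.
-/

open Finset Real

theorem exp_mul_le_exp_add_sub_exp (h d : ℝ) : exp h * d ≤ exp (h + d) - exp h := by
  have := mul_le_mul_of_nonneg_left (add_one_le_exp d) (exp_pos h).le
  rw [exp_add]
  linarith

section DonskerVaradhan

variable {V : Type*} [Fintype V] (R : V → V → ℝ) (μ : V → ℝ)

theorem DVJ_sub_DVJ (G H : V → ℝ) :
    DVJ R H μ - DVJ R G μ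
      = ∑ x, ∑ y, μ x * R x y * (exp (G y - G x) - exp (H y - H x)) := by
  simp only [DVJ, ← sum_sub_distrib]
  congr! 2 with x _ y _
  ring

theorem DVJ_le_of_stationary (hR : ∀ x y, 0 ≤ R x y) (hμ0 : ∀ x, 0 ≤ μ x) (H : V → ℝ)
    (hstat : ∀ g : V → ℝ,
      ∑ x, μ x * ∑ y, R x y * exp (H y - H x) * (g y - g x) = 0)
    (G : V → ℝ) : DVJ R G μ ≤ DVJ R H μ := by
  have hedge : ∀ x y, μ x * (R x y * exp (H y - H x) * ((G - H) y - (G - H) x))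
      ≤ μ x * R x y * (exp (G y - G x) - exp (H y - H x)) := fun x y => by
    have hexp := exp_mul_le_exp_add_sub_exp (H y - H x) ((G - H) y - (G - H) x)
    rw [show H y - H x + ((G - H) y - (G - H) x) = G y - G x by simp only [Pi.sub_apply]; ring]
      at hexp
    have := mul_le_mul_of_nonneg_left hexp (mul_nonneg (hμ0 x) (hR x y))
    linarith
  have hsum : 0 ≤ ∑ x, ∑ y, μ x * R x y * (exp (G y - G x) - exp (H y - H x)) :=
    calc (0 : ℝ) = ∑ x, μ x * ∑ y, R x y * exp (H y - H x) * ((G - H) y - (G - H) x) :=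
          (hstat (G - H)).symm
      _ ≤ _ := by
          simp only [mul_sum]
          exact sum_le_sum fun x _ => sum_le_sum fun y _ => hedge x y
  linarith [DVJ_sub_DVJ R μ G H]

end DonskerVaradhan

theorem stmt_17_general {V : Type*} [Fintype V]
    (R : V → V → ℝ) (hR : ∀ x y, 0 ≤ R x y)
    (μ : V → ℝ) (hμ0 : ∀ x, 0 ≤ μ x)
    (H : V → ℝ)
    -- μ is stationary for the chain tilted by H, with rates
    -- `R_H(x,y) = R(x,y) e^{H(y)−H(x)}`
    (hstat : ∀ g : V → ℝ,
      ∑ x, μ x * ∑ y, R x y * Real.exp (H y - H x) * (g y - g x) = 0) :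
    DV R μ = DVJ R H μ := by
  have hmax := DVJ_le_of_stationary R μ hR hμ0 H hstat
  exact le_antisymm (ciSup_le hmax) (le_ciSup ⟨_, by rintro _ ⟨G, rfl⟩; exact hmax G⟩ H)

theorem stmt_17 {V : Type*} [Fintype V] [Nonempty V]
    (R : V → V → ℝ) (hR : ∀ x y, 0 ≤ R x y)
    (hirr : ∀ x y : V, Relation.ReflTransGen (fun a b => 0 < R a b) x y)
    (μ : V → ℝ) (hμ0 : ∀ x, 0 ≤ μ x) (hμ1 : ∑ x, μ x = 1)
    (H : V → ℝ)
    -- μ is stationary for the chain tilted by H, with rates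
    -- `R_H(x,y) = R(x,y) e^{H(y)−H(x)}`
    (hstat : ∀ g : V → ℝ,
      ∑ x, μ x * ∑ y, R x y * Real.exp (H y - H x) * (g y - g x) = 0) :
    DV R μ = DVJ R H μ :=
  stmt_17_general R hR μ hμ0 H hstat
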